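/- arXiv:2408.01839 — 5 statements merged into one kernel-verified Lean document; each statement's English description precedes it below -/
import Mathlib

section
/- If F: ℝ^d → ℝ is differentiable and for all x in a set X satisfies F(x) - F* ≤ τ ||∇F(x)||^α with α ∈ (1,2] and τ > 0, and the level set {x' : F(x') ≤ F(x)} is contained in X for every x ∈ X, and the set M of global minimizers of F in X is nonempty, then for every x ∈ X, the distance from x to M satisfies inf_{v ∈ M} ||x - v|| ≤ (α/(α-1)) · τ^{1/α} · (F(x) - F*)^{(α-1)/α}. -/
/-!
Set `θ = (α - 1)/α` and `φ = (F - F*)^θ`. By the chain rule, gradient dominance becomes the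
lower bound `m = θ / τ^(1/α)` on the slope of `φ` wherever `F > F*`, and `M` is the zero set
of `φ`. For `c < m`, a minimizer `y` of `φ + c‖· - x‖` (it exists in finite dimension) lies in
the sublevel set of `x`, hence in `X`, and the slope of `φ` at `y` is at most `c`; so `φ y = 0`
and `dist(x, M) ≤ ‖y - x‖ ≤ φ x / c`. Letting `c → m` gives `dist(x, M) ≤ φ x / m`.
-/

open Filter Topology Metric

theorem one_div_rpow_le_rpow_neg_mul {r g τ α : ℝ} (hr : 0 < r) (hg : 0 ≤ g) (hτ : 0 < τ)
    (hα : 0 < α) (h : r ≤ τ * g ^ α) : 1 / τ ^ (1 / α) ≤ r ^ (-(1 / α)) * g := by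
  have hroot : r ^ (1 / α) ≤ τ ^ (1 / α) * g :=
    calc r ^ (1 / α) ≤ (τ * g ^ α) ^ (1 / α) := Real.rpow_le_rpow hr.le h (by positivity)
      _ = τ ^ (1 / α) * g := by
        rw [Real.mul_rpow hτ.le (by positivity), ← Real.rpow_mul hg, mul_one_div_cancel hα.ne',
          Real.rpow_one]
  rw [Real.rpow_neg hr.le, ← div_eq_inv_mul, div_le_div_iff₀ (by positivity) (by positivity)]
  linarith

theorem Continuous.exists_ekeland_point {T : Type*} [PseudoMetricSpace T] [ProperSpace T]
    {φ : T → ℝ} (hφ : Continuous φ) (hbdd : BddBelow (Set.range φ)) (x : T) {c : ℝ}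
    (hc : 0 < c) : ∃ y, φ y + c * dist y x ≤ φ x ∧ ∀ z, φ y ≤ φ z + c * dist z y := by
  obtain ⟨b, hb⟩ := hbdd
  have : Nonempty T := ⟨x⟩
  have hcoercive : Tendsto (fun z => φ z + c * dist z x) (cocompact T) atTop :=
    tendsto_atTop_add_left_of_le _ b (fun z => hb ⟨z, rfl⟩)
      ((tendsto_dist_right_cocompact_atTop x).const_mul_atTop hc)
  obtain ⟨y, hy⟩ := (by fun_prop : Continuous fun z => φ z + c * dist z x).exists_forall_le
    hcoercive
  refine ⟨y, by simpa using hy x, fun z => ?_⟩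
  nlinarith [hy z, dist_triangle z y x]

section NormedSpace

variable {E : Type*} [NormedAddCommGroup E] [NormedSpace ℝ E]

theorem HasFDerivAt.norm_le_of_eventually_le_add_mul_norm {g : E → ℝ} {L : E →L[ℝ] ℝ} {y : E}
    (hg : HasFDerivAt g L y) {c : ℝ} (hc : 0 ≤ c)
    (hmin : ∀ᶠ z in 𝓝 y, g y ≤ g z + c * ‖z - y‖) : ‖L‖ ≤ c := by
  rw [← map_add_left_nhds_zero y, eventually_map] at hmin
  have hlower : ∀ ε > 0, ∀ᶠ v in 𝓝 (0 : E), -L v ≤ (c + ε) * ‖v‖ := by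
    intro ε hε
    filter_upwards [Asymptotics.isLittleO_iff.1 (hasFDerivAt_iff_isLittleO_nhds_zero.1 hg) hε,
      hmin] with v hv hvmin
    rw [add_sub_cancel_left] at hvmin
    rw [Real.norm_eq_abs] at hv
    linarith [le_abs_self (g (y + v) - g y - L v)]
  refine le_of_forall_pos_le_add fun ε hε => L.opNorm_le_of_nhds_zero (by positivity) ?_
  filter_upwards [hlower ε hε,
    (continuous_neg.tendsto' (0 : E) 0 neg_zero).eventually (hlower ε hε)] with v hv hnegv
  rw [map_neg, neg_neg, norm_neg] at hnegv
  rw [Real.norm_eq_abs, abs_le]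
  constructor <;> linarith

theorem infDist_preimage_zero_le_div [ProperSpace E] {φ : E → ℝ} (hφ : Continuous φ)
    (hφ0 : ∀ z, 0 ≤ φ z) {m : ℝ} (hm : 0 < m) {x : E}
    (hslope : ∀ y, φ y ≤ φ x → 0 < φ y → ∃ L : E →L[ℝ] ℝ, HasFDerivAt φ L y ∧ m ≤ ‖L‖) :
    infDist x (φ ⁻¹' {0}) ≤ φ x / m := by
  have hlt : ∀ c ∈ Set.Ioo 0 m, infDist x (φ ⁻¹' {0}) ≤ φ x / c := by
    rintro c ⟨hc, hcm⟩
    obtain ⟨y, hyx, hy⟩ := hφ.exists_ekeland_point ⟨0, by rintro _ ⟨z, rfl⟩; exact hφ0 z⟩ x hc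
    have hzero : φ y = 0 := by
      refine le_antisymm (not_lt.1 fun hpos => ?_) (hφ0 y)
      obtain ⟨L, hL, hmL⟩ := hslope y (by nlinarith [dist_nonneg (x := y) (y := x)]) hpos
      have := hL.norm_le_of_eventually_le_add_mul_norm hc.le
        (.of_forall fun z => dist_eq_norm z y ▸ hy z)
      linarith
    calc infDist x (φ ⁻¹' {0}) ≤ dist y x := dist_comm x y ▸ infDist_le_dist_of_mem hzero
      _ ≤ φ x / c := by rw [le_div_iff₀ hc]; linarith
  refine ge_of_tendsto (x := 𝓝[<] m)
    ((continuousAt_const.div continuousAt_id hm.ne').tendsto.mono_left nhdsWithin_le_nhds) ?_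
  filter_upwards [Ioo_mem_nhdsLT hm] with c hc using hlt c hc

theorem HasFDerivAt.exists_rpow_sub_le_norm {F : E → ℝ} {F' : E →L[ℝ] ℝ} {y : E} {a α τ : ℝ}
    (hF : HasFDerivAt F F' y) (hα : 1 < α) (hτ : 0 < τ) (hpos : a < F y)
    (hdom : F y - a ≤ τ * ‖F'‖ ^ α) :
    ∃ L : E →L[ℝ] ℝ, HasFDerivAt (fun z => (F z - a) ^ ((α - 1) / α)) L y ∧
      (α - 1) / α / τ ^ (1 / α) ≤ ‖L‖ := by
  have hr : 0 < F y - a := sub_pos.2 hpos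
  have hα0 : 0 < α := by linarith
  refine ⟨_, (hF.sub_const a).rpow_const (Or.inl hr.ne'), ?_⟩
  have hexp : (α - 1) / α - 1 = -(1 / α) := by field_simp; ring
  rw [norm_smul, Real.norm_of_nonneg (by positivity), mul_assoc, div_eq_mul_one_div _ (τ ^ _),
    hexp]
  gcongr
  exact one_div_rpow_le_rpow_neg_mul hr (norm_nonneg _) hτ hα0 hdom

end NormedSpace

theorem IsGLB.sep_forall_le_eq {T : Type*} {F : T → ℝ} {Fstar : ℝ}
    (hlb : IsGLB (Set.range F) Fstar) {X : Set T} {x : T}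
    (hlev : {x' | F x' ≤ F x} ⊆ X) : {v ∈ X | ∀ y, F v ≤ F y} = {v | F v = Fstar} := by
  have hFstar : ∀ z, Fstar ≤ F z := fun z => hlb.1 ⟨z, rfl⟩
  ext v
  refine ⟨fun ⟨_, hmin⟩ => le_antisymm (hlb.2 ?_) (hFstar v), fun hv => ⟨?_, ?_⟩⟩
  · rintro _ ⟨z, rfl⟩
    exact hmin z
  · exact hlev (hv.trans_le (hFstar x))
  · exact fun z => hv ▸ hFstar z

theorem stmt_0_general {d : ℕ} (F : EuclideanSpace ℝ (Fin d) → ℝ) (Fstar α τ : ℝ)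
    (hF : Differentiable ℝ F) (hlb : IsGLB (Set.range F) Fstar)
    (X : Set (EuclideanSpace ℝ (Fin d)))
    (hα1 : 1 < α) (hτ : 0 < τ)
    (hdom : ∀ x ∈ X, F x - Fstar ≤ τ * ‖gradient F x‖ ^ α)
    (hlev : ∀ x ∈ X, {x' | F x' ≤ F x} ⊆ X)
    (M : Set (EuclideanSpace ℝ (Fin d)))
    (hM : M = {v ∈ X | ∀ y, F v ≤ F y}) :
    ∀ x ∈ X, Metric.infDist x M ≤
      (α / (α - 1)) * τ ^ (1/α) * (F x - Fstar) ^ ((α - 1)/α) := by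
  intro x hx
  have hθ : 0 < (α - 1) / α := div_pos (by linarith) (by linarith)
  have hFstar : ∀ z, Fstar ≤ F z := fun z => hlb.1 ⟨z, rfl⟩
  set φ := fun z => (F z - Fstar) ^ ((α - 1) / α) with hφ
  have hφ_le_iff : ∀ y, φ y ≤ φ x ↔ F y ≤ F x := fun y =>
    (Real.rpow_le_rpow_iff (sub_nonneg.2 (hFstar y)) (sub_nonneg.2 (hFstar x)) hθ).trans
      (sub_le_sub_iff_right Fstar)
  have hφ_eq_zero_iff : ∀ y, φ y = 0 ↔ F y = Fstar := fun y =>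
    (Real.rpow_eq_zero (sub_nonneg.2 (hFstar y)) hθ.ne').trans sub_eq_zero
  have hM_eq : M = φ ⁻¹' {0} := by
    rw [hM, hlb.sep_forall_le_eq (hlev x hx)]
    exact Set.ext fun v => (hφ_eq_zero_iff v).symm
  have hgrad : ∀ y, ‖gradient F y‖ = ‖fderiv ℝ F y‖ := fun y =>
    (InnerProductSpace.toDual ℝ _).symm.norm_map _
  have hslope : ∀ y, φ y ≤ φ x → 0 < φ y → ∃ L : _ →L[ℝ] ℝ, HasFDerivAt φ L y ∧
      (α - 1) / α / τ ^ (1 / α) ≤ ‖L‖ := fun y hyx hy =>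
    (hF y).hasFDerivAt.exists_rpow_sub_le_norm hα1 hτ
      (lt_of_le_of_ne (hFstar y) fun h => hy.ne' ((hφ_eq_zero_iff y).2 h.symm))
      (hgrad y ▸ hdom y (hlev x hx ((hφ_le_iff y).1 hyx)))
  calc Metric.infDist x M ≤ φ x / ((α - 1) / α / τ ^ (1 / α)) :=
        hM_eq ▸ infDist_preimage_zero_le_div
          ((hF.continuous.sub continuous_const).rpow_const fun _ => Or.inr hθ.le)
          (fun z => Real.rpow_nonneg (sub_nonneg.2 (hFstar z)) _) (by positivity) hslope
    _ = _ := by simp only [hφ]; field_simp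

theorem stmt_0 {d : ℕ} (F : EuclideanSpace ℝ (Fin d) → ℝ) (Fstar α τ : ℝ)
    (hF : Differentiable ℝ F) (hlb : IsGLB (Set.range F) Fstar)
    (X : Set (EuclideanSpace ℝ (Fin d))) (hX : IsClosed X)
    (hα1 : 1 < α) (hα2 : α ≤ 2) (hτ : 0 < τ)
    (hdom : ∀ x ∈ X, F x - Fstar ≤ τ * ‖gradient F x‖ ^ α)
    (hlev : ∀ x ∈ X, {x' | F x' ≤ F x} ⊆ X)
    (M : Set (EuclideanSpace ℝ (Fin d)))
    (hM : M = {v ∈ X | ∀ y, F v ≤ F y}) (hMne : M.Nonempty) :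
    ∀ x ∈ X, Metric.infDist x M ≤
      (α / (α - 1)) * τ ^ (1/α) * (F x - Fstar) ^ ((α - 1)/α) :=
  stmt_0_general F Fstar α τ hF hlb X hα1 hτ hdom hlev M hM
end

section
/- Let F: ℝ^d → ℝ be differentiable whose gradient satisfies the (L,β)-Hölder condition ||∇F(x) - ∇F(y)|| ≤ L||x - y||^{1/(β-1)} for β > 2 (or β = 2, i.e. L-smooth). If additionally F(x) - F* ≤ τ||∇F(x)||^α holds for all x in a closed set X with 1 ≤ α < β, then for every x ∈ X the suboptimality gap is uniformly bounded: F(x) - F* ≤ β^{α/(β-α)} · L^{α(β-1)/(β-α)} · τ^{β/(β-α)}. -/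
/-!
With `ν = 1/(β-1)`, the Hölder condition gives the descent inequality
`F (x + v) ≤ F x + ⟪∇F x, v⟫ + L‖v‖^(1+ν)/(1+ν)`. A gradient step of the optimal length
`(‖∇F x‖/L)^(β-1)` cannot go below `F*`, which yields `‖∇F x‖^β ≤ β L^(β-1) (F x - F*)`.
On `X` this combines with `F x - F* ≤ τ ‖∇F x‖^α` into `G^β ≤ τ^β (β L^(β-1))^α G^α` for the gap
`G = F x - F*`, and `α < β` bounds `G`.
-/

open Real RealInnerProductSpace

section HolderGradient

variable {E : Type*} [NormedAddCommGroup E] [InnerProductSpace ℝ E] [CompleteSpace E]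
  {F : E → ℝ} {L ν : ℝ}

lemma hasDerivAt_comp_add_smul {x v : E} {t : ℝ} (hF : DifferentiableAt ℝ F (x + t • v)) :
    HasDerivAt (fun s : ℝ => F (x + s • v)) ⟪gradient F (x + t • v), v⟫ t := by
  have hline : HasDerivAt (fun s : ℝ => x + s • v) v t := by
    simpa using ((hasDerivAt_id t).smul_const v).const_add x
  simpa [InnerProductSpace.toDual_apply_apply, Function.comp_def] using
    hF.hasGradientAt.hasFDerivAt.comp_hasDerivAt t hline

lemma inner_gradient_add_smul_sub_le (hν : 0 ≤ ν)
    (hHolder : ∀ x y, ‖gradient F x - gradient F y‖ ≤ L * ‖x - y‖ ^ ν)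
    (x v : E) {t : ℝ} (ht : 0 ≤ t) :
    ⟪gradient F (x + t • v) - gradient F x, v⟫ ≤ L * ‖v‖ ^ (1 + ν) * t ^ ν := by
  have hH : ‖gradient F (x + t • v) - gradient F x‖ ≤ L * (t * ‖v‖) ^ ν := by
    simpa [norm_smul, abs_of_nonneg ht] using hHolder (x + t • v) x
  calc ⟪gradient F (x + t • v) - gradient F x, v⟫
      ≤ ‖gradient F (x + t • v) - gradient F x‖ * ‖v‖ := real_inner_le_norm _ _
    _ ≤ L * (t * ‖v‖) ^ ν * ‖v‖ := mul_le_mul_of_nonneg_right hH (norm_nonneg v)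
    _ = L * ‖v‖ ^ (1 + ν) * t ^ ν := by
      rw [mul_rpow ht (norm_nonneg v), rpow_one_add' (norm_nonneg v) (by linarith)]
      ring

lemma apply_add_le_of_holder_gradient (hF : Differentiable ℝ F) (hν : 0 ≤ ν)
    (hHolder : ∀ x y, ‖gradient F x - gradient F y‖ ≤ L * ‖x - y‖ ^ ν) (x v : E) :
    F (x + v) ≤ F x + ⟪gradient F x, v⟫ + L * ‖v‖ ^ (1 + ν) / (1 + ν) := by
  set C := L * ‖v‖ ^ (1 + ν)
  set ψ : ℝ → ℝ := fun t => F (x + t • v) - t * ⟪gradient F x, v⟫ - C * t ^ (1 + ν) / (1 + ν)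
  have hψ : ∀ t, HasDerivAt ψ (⟪gradient F (x + t • v) - gradient F x, v⟫ - C * t ^ ν) t := by
    intro t
    have hpow := (hasDerivAt_rpow_const (x := t) (p := 1 + ν) (Or.inr (by linarith))).const_mul C
      |>.div_const (1 + ν)
    refine (((hasDerivAt_comp_add_smul (hF _)).sub
      ((hasDerivAt_id t).mul_const ⟪gradient F x, v⟫)).sub hpow).congr_deriv ?_
    rw [inner_sub_left, add_sub_cancel_left]
    field_simp
  have hanti : AntitoneOn ψ (Set.Icc 0 1) := by
    refine antitoneOn_of_hasDerivWithinAt_nonpos (convex_Icc 0 1)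
      (fun t _ => (hψ t).continuousAt.continuousWithinAt) (fun t _ => (hψ t).hasDerivWithinAt)
      fun t ht => ?_
    rw [interior_Icc] at ht
    linarith [inner_gradient_add_smul_sub_le hν hHolder x v ht.1.le]
  have h01 := hanti (by simp) (by simp) zero_le_one
  simp only [ψ, zero_smul, add_zero, one_smul, zero_mul, one_mul, mul_one, one_rpow,
    zero_rpow (by linarith : 1 + ν ≠ 0), mul_zero, zero_div, sub_zero] at h01
  linarith

/-- The guaranteed decrease `r a - L r^(1+ν)/(1+ν)`, `ν = 1/(β-1)`, of a step of length `r`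
against a gradient of norm `a`, at its maximiser `r = (a/L)^(β-1)`. -/
lemma optimal_step_gain {a L β : ℝ} (ha : 0 ≤ a) (hL : 0 < L) (hβ : 1 < β) :
    (a / L) ^ (β - 1) * a - L * ((a / L) ^ (β - 1)) ^ (1 + 1 / (β - 1)) / (1 + 1 / (β - 1))
      = a ^ β / (β * L ^ (β - 1)) := by
  set u := a / L
  have hu : 0 ≤ u := div_nonneg ha hL.le
  have hau : a = L * u := by simp only [u]; field_simp
  have hupow : u ^ (β - 1) * u = u ^ β := by
    rw [← rpow_add_one' hu (by linarith), sub_add_cancel]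
  have hexp : (β - 1) * (1 + 1 / (β - 1)) = β := by field_simp [(by linarith : β - 1 ≠ 0)]; ring
  have hLpow : L ^ β = L ^ (β - 1) * L := by
    rw [← rpow_add_one' hL.le (by linarith), sub_add_cancel]
  rw [← rpow_mul hu, hexp, hau, mul_rpow hL.le hu, hLpow, mul_left_comm, hupow]
  have : 0 < L ^ (β - 1) := rpow_pos_of_pos hL _
  field_simp [(by linarith : β - 1 ≠ 0), (by linarith : β ≠ 0)]
  ring

lemma rpow_norm_gradient_le (hF : Differentiable ℝ F) {Fstar β : ℝ} (hlb : ∀ y, Fstar ≤ F y)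
    (hL : 0 < L) (hβ : 1 < β)
    (hHolder : ∀ x y, ‖gradient F x - gradient F y‖ ≤ L * ‖x - y‖ ^ (1 / (β - 1))) (x : E) :
    ‖gradient F x‖ ^ β ≤ β * L ^ (β - 1) * (F x - Fstar) := by
  set g := gradient F x
  rcases (norm_nonneg g).eq_or_lt with hg | hg
  · rw [← hg, zero_rpow (by linarith)]
    exact mul_nonneg (by positivity) (sub_nonneg.2 (hlb x))
  set r := (‖g‖ / L) ^ (β - 1)
  have hr : 0 ≤ r := by positivity
  have hinner : ⟪g, -(r / ‖g‖) • g⟫ = -(r * ‖g‖) := by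
    rw [real_inner_smul_right, real_inner_self_eq_norm_sq]
    field_simp
  have hnorm : ‖-(r / ‖g‖) • g‖ = r := by
    rw [norm_smul, norm_neg, norm_div, norm_norm, Real.norm_of_nonneg hr, div_mul_cancel₀ _ hg.ne']
  have hdescent := apply_add_le_of_holder_gradient hF (one_div_nonneg.2 (by linarith)) hHolder x
    (-(r / ‖g‖) • g)
  rw [hinner, hnorm] at hdescent
  have hgain : ‖g‖ ^ β / (β * L ^ (β - 1)) ≤ F x - Fstar := by
    linarith [optimal_step_gain hg.le hL hβ, hlb (x + -(r / ‖g‖) • g)]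
  rwa [div_le_iff₀ (by positivity), mul_comm] at hgain

end HolderGradient

lemma le_rpow_mul_rpow_of_le_mul_rpow {G a τ B α β : ℝ} (ha : 0 ≤ a) (hτ : 0 ≤ τ) (hB : 0 ≤ B)
    (hα : 0 < α) (hαβ : α < β) (hdom : G ≤ τ * a ^ α) (hgrad : a ^ β ≤ B * G) :
    G ≤ τ ^ (β / (β - α)) * B ^ (α / (β - α)) := by
  rcases le_or_gt G 0 with hG | hG
  · exact hG.trans (by positivity)
  have hβ : 0 < β := hα.trans hαβ
  have hpow : G ^ β ≤ τ ^ β * B ^ α * G ^ α := calc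
    G ^ β ≤ (τ * a ^ α) ^ β := rpow_le_rpow hG.le hdom hβ.le
    _ = τ ^ β * (a ^ β) ^ α := by
      rw [mul_rpow hτ (by positivity), ← rpow_mul ha, ← rpow_mul ha, mul_comm α]
    _ ≤ τ ^ β * (B * G) ^ α := by gcongr
    _ = τ ^ β * B ^ α * G ^ α := by rw [mul_rpow hB hG.le, mul_assoc]
  have hsub : G ^ (β - α) ≤ τ ^ β * B ^ α := by
    rwa [rpow_sub hG, div_le_iff₀ (by positivity)]
  calc G = (G ^ (β - α)) ^ (1 / (β - α)) := by
        rw [← rpow_mul hG.le, mul_one_div_cancel (by linarith), rpow_one]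
    _ ≤ (τ ^ β * B ^ α) ^ (1 / (β - α)) :=
        rpow_le_rpow (by positivity) hsub (one_div_nonneg.2 (by linarith))
    _ = τ ^ (β / (β - α)) * B ^ (α / (β - α)) := by
        rw [mul_rpow (by positivity) (by positivity), ← rpow_mul hτ, ← rpow_mul hB,
          mul_one_div, mul_one_div]

theorem stmt_2_general {d : ℕ} (F : EuclideanSpace ℝ (Fin d) → ℝ) (Fstar L β α τ : ℝ)
    (hF : Differentiable ℝ F) (hlb : IsGLB (Set.range F) Fstar)
    (hL : 0 < L) (hβ : 2 ≤ β) (hτ : 0 < τ) (hα1 : 1 ≤ α) (hαβ : α < β)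
    (hHolder : ∀ x y, ‖gradient F x - gradient F y‖ ≤ L * ‖x - y‖ ^ (1/(β-1)))
    (X : Set (EuclideanSpace ℝ (Fin d)))
    (hdom : ∀ x ∈ X, F x - Fstar ≤ τ * ‖gradient F x‖ ^ α) :
    ∀ x ∈ X, F x - Fstar ≤
      β ^ (α/(β-α)) * L ^ (α*(β-1)/(β-α)) * τ ^ (β/(β-α)) := by
  intro x hx
  have hgrad := rpow_norm_gradient_le hF (fun y => hlb.1 ⟨y, rfl⟩) hL (by linarith) hHolder x
  have hbound := le_rpow_mul_rpow_of_le_mul_rpow (norm_nonneg _) hτ.le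
    (by positivity) (by linarith) hαβ (hdom x hx) hgrad
  have hB : (β * L ^ (β - 1)) ^ (α / (β - α))
      = β ^ (α / (β - α)) * L ^ (α * (β - 1) / (β - α)) := by
    rw [mul_rpow (by linarith) (by positivity), ← rpow_mul hL.le, mul_div_assoc', mul_comm α]
  rwa [hB, mul_comm] at hbound

theorem stmt_2 {d : ℕ} (F : EuclideanSpace ℝ (Fin d) → ℝ) (Fstar L β α τ : ℝ)
    (hF : Differentiable ℝ F) (hlb : IsGLB (Set.range F) Fstar)
    (hL : 0 < L) (hβ : 2 ≤ β) (hτ : 0 < τ) (hα1 : 1 ≤ α) (hαβ : α < β)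
    (hHolder : ∀ x y, ‖gradient F x - gradient F y‖ ≤ L * ‖x - y‖ ^ (1/(β-1)))
    (X : Set (EuclideanSpace ℝ (Fin d))) (hX : IsClosed X)
    (hdom : ∀ x ∈ X, F x - Fstar ≤ τ * ‖gradient F x‖ ^ α) :
    ∀ x ∈ X, F x - Fstar ≤
      β ^ (α/(β-α)) * L ^ (α*(β-1)/(β-α)) * τ ^ (β/(β-α)) :=
  stmt_2_general F Fstar L β α τ hF hlb hL hβ hτ hα1 hαβ hHolder X hdom
end

section
/- There is no differentiable function F: ℝ^d → ℝ with a nonempty bounded set of global minimizers that is simultaneously L-smooth (gradient L-Lipschitz) and (α,τ)-gradient-dominated on all of ℝ^d for any exponent α strictly between 1 and 2. -/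
/-! The gradient step `x ↦ x - (2L)⁻¹ ∇F x` lowers `F` by at least `‖∇F x‖² / 4L`, so
`‖∇F‖² ≤ 4L (F - F*)`; with gradient dominance and `α < 2` this bounds `‖∇F‖`, hence the gap
`F - F*`, uniformly on the space. On the other hand, by the Łojasiewicz argument (concavity of
`t ↦ t ^ (1 - α⁻¹)`) the gradient-descent trajectory from any `x` has length at most
`2 τ ^ α⁻¹ / (1 - α⁻¹) * (F x - F*) ^ (1 - α⁻¹)` and drives `F` down to `F*`, so it reaches a
minimizer within that distance. Every point is therefore uniformly close to the bounded set of
minimizers, which is impossible in a nontrivial normed space. -/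

open Real Filter Topology

lemma mul_sub_le_rpow_sub_rpow_mul_rpow {a b p : ℝ} (ha : 0 ≤ a) (hb : 0 ≤ b)
    (hp₀ : 0 ≤ p) (hp₁ : p ≤ 1) : p * (a - b) ≤ (a ^ p - b ^ p) * a ^ (1 - p) := by
  -- weighted AM-GM: `b ^ p * a ^ (1 - p) ≤ p * b + (1 - p) * a`
  have hamgm := geom_mean_le_arith_mean2_weighted hp₀ (sub_nonneg.2 hp₁) hb ha (by ring)
  have hsplit : a ^ p * a ^ (1 - p) = a := by
    rw [← rpow_add' ha (by norm_num), add_sub_cancel, rpow_one]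
  linarith [sub_mul (a ^ p) (b ^ p) (a ^ (1 - p))]

lemma le_mul_rpow_sub_rpow_of_sq_le {c τ α a b s : ℝ} (hc : 0 < c) (hτ : 0 ≤ τ) (hα : 1 < α)
    (hb : 0 ≤ b) (hs : 0 ≤ s) (hdec : s ^ 2 ≤ c * (a - b)) (hdom : a ≤ τ * s ^ α) :
    s ≤ c * τ ^ α⁻¹ / (1 - α⁻¹) * (a ^ (1 - α⁻¹) - b ^ (1 - α⁻¹)) := by
  set p := 1 - α⁻¹
  have hαinv : α⁻¹ < 1 := inv_lt_one_of_one_lt₀ hα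
  have hp : 0 < p := sub_pos.2 hαinv
  have hp₁ : p ≤ 1 := sub_le_self _ (by positivity)
  have hba : b ≤ a := by nlinarith [sq_nonneg s]
  have hΔ : 0 ≤ a ^ p - b ^ p := sub_nonneg.2 (rpow_le_rpow hb hba hp.le)
  have hroot : a ^ α⁻¹ ≤ τ ^ α⁻¹ * s := by
    calc a ^ α⁻¹ ≤ (τ * s ^ α) ^ α⁻¹ := rpow_le_rpow (hb.trans hba) hdom (by positivity)
    _ = τ ^ α⁻¹ * s := by
      rw [mul_rpow hτ (by positivity), ← rpow_mul hs, mul_inv_cancel₀ (by positivity),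
        rpow_one]
  have hconc : p * (a - b) ≤ (a ^ p - b ^ p) * (τ ^ α⁻¹ * s) := by
    have := mul_sub_le_rpow_sub_rpow_mul_rpow (hb.trans hba) hb hp.le hp₁
    rw [show 1 - p = α⁻¹ by ring] at this
    exact this.trans (mul_le_mul_of_nonneg_left hroot hΔ)
  have hK : 0 ≤ c * τ ^ α⁻¹ / p * (a ^ p - b ^ p) := by positivity
  have hsq : s * s ≤ c * τ ^ α⁻¹ / p * (a ^ p - b ^ p) * s := by
    calc s * s ≤ c * (a - b) := by nlinarith
    _ = c / p * (p * (a - b)) := by field_simp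
    _ ≤ c / p * ((a ^ p - b ^ p) * (τ ^ α⁻¹ * s)) := by gcongr
    _ = c * τ ^ α⁻¹ / p * (a ^ p - b ^ p) * s := by ring
  nlinarith

lemma le_max_one_rpow_of_sq_le_mul_rpow {c α s : ℝ} (hα : α < 2) (hs : 0 ≤ s)
    (h : s ^ 2 ≤ c * s ^ α) : s ≤ max 1 (c ^ (2 - α)⁻¹) := by
  rcases le_or_gt s 1 with hs1 | hs1
  · exact hs1.trans (le_max_left _ _)
  have hspos : 0 < s := one_pos.trans hs1
  have hpow : s ^ (2 - α) ≤ c := by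
    rw [rpow_sub hspos, div_le_iff₀ (rpow_pos_of_pos hspos α), rpow_two]
    exact h
  calc s = (s ^ (2 - α)) ^ (2 - α)⁻¹ := by
        rw [← rpow_mul hs, mul_inv_cancel₀ (by linarith), rpow_one]
  _ ≤ c ^ (2 - α)⁻¹ := rpow_le_rpow (by positivity) hpow (inv_nonneg.2 (by linarith))
  _ ≤ _ := le_max_right _ _

section GradientDescent

variable {E : Type*} [NormedAddCommGroup E] [InnerProductSpace ℝ E] [CompleteSpace E]
  {L : ℝ} {F : E → ℝ}

lemma le_add_inner_gradient_add_mul_norm_sq (hF : Differentiable ℝ F) (hL : 0 ≤ L)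
    (hlip : ∀ x y, ‖gradient F x - gradient F y‖ ≤ L * ‖x - y‖) (x y : E) :
    F y ≤ F x + inner ℝ (gradient F x) (y - x) + L * ‖y - x‖ ^ 2 := by
  have hderiv (z : E) : HasFDerivWithinAt F (InnerProductSpace.toDual ℝ E (gradient F z))
      (segment ℝ x y) z :=
    (hasGradientAt_iff_hasFDerivAt.mp (hF z).hasGradientAt).hasFDerivWithinAt
  have hbound : ∀ z ∈ segment ℝ x y, ‖InnerProductSpace.toDual ℝ E (gradient F z)
      - InnerProductSpace.toDual ℝ E (gradient F x)‖ ≤ L * ‖y - x‖ := by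
    rintro z ⟨a, b, ha, hb, hab, rfl⟩
    rw [← map_sub, LinearIsometryEquiv.norm_map]
    have hzx : a • x + b • y - x = b • (y - x) := by
      rw [eq_sub_of_add_eq hab]; module
    calc ‖gradient F (a • x + b • y) - gradient F x‖ ≤ L * ‖a • x + b • y - x‖ := hlip _ _
    _ = L * (b * ‖y - x‖) := by rw [hzx, norm_smul, norm_of_nonneg hb]
    _ ≤ L * ‖y - x‖ := by
        gcongr; exact mul_le_of_le_one_left (norm_nonneg _) (by linarith)
  have hmvt := Convex.norm_image_sub_le_of_norm_hasFDerivWithin_le'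
    (fun z _ => hderiv z) hbound (convex_segment x y) (left_mem_segment ℝ x y)
    (right_mem_segment ℝ x y)
  rw [InnerProductSpace.toDual_apply_apply, Real.norm_eq_abs] at hmvt
  nlinarith [(abs_le.mp hmvt).2]

variable (L F) in
noncomputable def gradientStep (x : E) : E := x - (2 * L)⁻¹ • gradient F x

lemma norm_gradientStep_sub (hL : 0 < L) (x : E) :
    ‖gradientStep L F x - x‖ = (2 * L)⁻¹ * ‖gradient F x‖ := by
  rw [gradientStep, sub_sub_cancel_left, norm_neg, norm_smul, norm_of_nonneg (by positivity)]

lemma apply_gradientStep_le (hF : Differentiable ℝ F) (hL : 0 < L)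
    (hlip : ∀ x y, ‖gradient F x - gradient F y‖ ≤ L * ‖x - y‖) (x : E) :
    F (gradientStep L F x) ≤ F x - ‖gradient F x‖ ^ 2 / (4 * L) := by
  have h := le_add_inner_gradient_add_mul_norm_sq hF hL.le hlip x (gradientStep L F x)
  rw [norm_gradientStep_sub hL, gradientStep, sub_sub_cancel_left, inner_neg_right,
    real_inner_smul_right, real_inner_self_eq_norm_sq] at h
  have hcalc : -((2 * L)⁻¹ * ‖gradient F x‖ ^ 2) + L * ((2 * L)⁻¹ * ‖gradient F x‖) ^ 2
      = -(‖gradient F x‖ ^ 2 / (4 * L)) := by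
    field_simp; ring
  rw [gradientStep]
  linarith

lemma sq_norm_gradient_le_mul_sub (hF : Differentiable ℝ F) (hL : 0 < L)
    (hlip : ∀ x y, ‖gradient F x - gradient F y‖ ≤ L * ‖x - y‖) (x : E) :
    ‖gradient F x‖ ^ 2 ≤ 4 * L * (F x - F (gradientStep L F x)) := by
  have h := apply_gradientStep_le hF hL hlip x
  rw [le_sub_comm, div_le_iff₀ (by positivity)] at h
  linarith

lemma sq_norm_gradient_le {Fstar : ℝ} (hF : Differentiable ℝ F) (hL : 0 < L)
    (hlip : ∀ x y, ‖gradient F x - gradient F y‖ ≤ L * ‖x - y‖) (hFs : ∀ y, Fstar ≤ F y)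
    (x : E) : ‖gradient F x‖ ^ 2 ≤ 4 * L * (F x - Fstar) :=
  (sq_norm_gradient_le_mul_sub hF hL hlip x).trans (by gcongr; exact hFs _)

lemma norm_gradientStep_sub_le {τ α Fstar : ℝ} (hF : Differentiable ℝ F) (hL : 0 < L)
    (hlip : ∀ x y, ‖gradient F x - gradient F y‖ ≤ L * ‖x - y‖) (hFs : ∀ y, Fstar ≤ F y)
    (hτ : 0 ≤ τ) (hα : 1 < α) (hdom : ∀ x, F x - Fstar ≤ τ * ‖gradient F x‖ ^ α) (x : E) :
    ‖gradientStep L F x - x‖ ≤ 2 * τ ^ α⁻¹ / (1 - α⁻¹) *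
      ((F x - Fstar) ^ (1 - α⁻¹) - (F (gradientStep L F x) - Fstar) ^ (1 - α⁻¹)) := by
  have hdec : ‖gradient F x‖ ^ 2 ≤ 4 * L * ((F x - Fstar) - (F (gradientStep L F x) - Fstar)) :=
    (sq_norm_gradient_le_mul_sub hF hL hlip x).trans_eq (by ring)
  have h := le_mul_rpow_sub_rpow_of_sq_le (by positivity) hτ hα (sub_nonneg.2 (hFs _))
    (norm_nonneg _) hdec (hdom x)
  rw [norm_gradientStep_sub hL]
  calc (2 * L)⁻¹ * ‖gradient F x‖ ≤ (2 * L)⁻¹ * (4 * L * τ ^ α⁻¹ / (1 - α⁻¹) *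
      ((F x - Fstar) ^ (1 - α⁻¹) - (F (gradientStep L F x) - Fstar) ^ (1 - α⁻¹))) := by gcongr
  _ = _ := by field_simp; ring

lemma norm_iterate_gradientStep_sub_le {τ α Fstar : ℝ} (hF : Differentiable ℝ F) (hL : 0 < L)
    (hlip : ∀ x y, ‖gradient F x - gradient F y‖ ≤ L * ‖x - y‖) (hFs : ∀ y, Fstar ≤ F y)
    (hτ : 0 ≤ τ) (hα : 1 < α) (hdom : ∀ x, F x - Fstar ≤ τ * ‖gradient F x‖ ^ α)
    (x : E) (n : ℕ) :
    ‖(gradientStep L F)^[n] x - x‖ ≤ 2 * τ ^ α⁻¹ / (1 - α⁻¹) *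
      ((F x - Fstar) ^ (1 - α⁻¹) - (F ((gradientStep L F)^[n] x) - Fstar) ^ (1 - α⁻¹)) := by
  induction n with
  | zero => simp
  | succ n ih =>
    rw [Function.iterate_succ_apply']
    have hstep := norm_gradientStep_sub_le hF hL hlip hFs hτ hα hdom ((gradientStep L F)^[n] x)
    linarith [norm_sub_le_norm_sub_add_norm_sub (gradientStep L F ((gradientStep L F)^[n] x))
      ((gradientStep L F)^[n] x) x]

lemma tendsto_apply_iterate_gradientStep {τ α Fstar : ℝ} (hF : Differentiable ℝ F) (hL : 0 < L)
    (hlip : ∀ x y, ‖gradient F x - gradient F y‖ ≤ L * ‖x - y‖) (hFs : ∀ y, Fstar ≤ F y)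
    (hα : 0 < α) (hdom : ∀ x, F x - Fstar ≤ τ * ‖gradient F x‖ ^ α) (x : E) :
    Tendsto (fun n ↦ F ((gradientStep L F)^[n] x)) atTop (𝓝 Fstar) := by
  set u := fun n ↦ F ((gradientStep L F)^[n] x)
  set g := fun n ↦ ‖gradient F ((gradientStep L F)^[n] x)‖
  have hdec (n : ℕ) : g n ^ 2 ≤ 4 * L * (u n - u (n + 1)) := by
    simp only [u, g, Function.iterate_succ_apply']
    exact sq_norm_gradient_le_mul_sub hF hL hlip _
  have hu : Tendsto u atTop (𝓝 (⨅ n, u n)) :=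
    tendsto_atTop_ciInf (antitone_nat_of_succ_le fun n ↦ by nlinarith [hdec n, sq_nonneg (g n)])
      ⟨Fstar, by rintro _ ⟨n, rfl⟩; exact hFs _⟩
  have hdiff : Tendsto (fun n ↦ 4 * L * (u n - u (n + 1))) atTop (𝓝 0) := by
    simpa using (hu.sub (hu.comp (tendsto_add_atTop_nat 1))).const_mul (4 * L)
  have hg : Tendsto g atTop (𝓝 0) := by
    refine squeeze_zero (fun n ↦ norm_nonneg _) (fun n ↦ ?_) (by simpa using hdiff.sqrt)
    exact le_sqrt_of_sq_le (hdec n)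
  have hgα : Tendsto (fun n ↦ τ * g n ^ α) atTop (𝓝 0) := by
    simpa [zero_rpow hα.ne'] using (hg.rpow_const (Or.inr hα.le)).const_mul τ
  have hgap : Tendsto (fun n ↦ u n - Fstar) atTop (𝓝 0) :=
    squeeze_zero (fun n ↦ sub_nonneg.2 (hFs _)) (fun n ↦ hdom _) hgα
  simpa using hgap.add_const Fstar

lemma exists_forall_le_and_norm_sub_le [ProperSpace E] {τ α Fstar : ℝ} (hF : Differentiable ℝ F)
    (hL : 0 < L) (hlip : ∀ x y, ‖gradient F x - gradient F y‖ ≤ L * ‖x - y‖)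
    (hFs : ∀ y, Fstar ≤ F y) (hτ : 0 ≤ τ) (hα : 1 < α)
    (hdom : ∀ x, F x - Fstar ≤ τ * ‖gradient F x‖ ^ α) (x : E) :
    ∃ z, (∀ y, F z ≤ F y) ∧ ‖x - z‖ ≤ 2 * τ ^ α⁻¹ / (1 - α⁻¹) * (F x - Fstar) ^ (1 - α⁻¹) := by
  set K := 2 * τ ^ α⁻¹ / (1 - α⁻¹) * (F x - Fstar) ^ (1 - α⁻¹)
  have hp : 0 < 1 - α⁻¹ := sub_pos.2 (inv_lt_one_of_one_lt₀ hα)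
  have hmem (n : ℕ) : (gradientStep L F)^[n] x ∈ Metric.closedBall x K := by
    rw [Metric.mem_closedBall, dist_eq_norm]
    refine (norm_iterate_gradientStep_sub_le hF hL hlip hFs hτ hα hdom x n).trans ?_
    have := rpow_nonneg (sub_nonneg.2 (hFs ((gradientStep L F)^[n] x))) (1 - α⁻¹)
    exact mul_le_mul_of_nonneg_left (sub_le_self _ this) (by positivity)
  obtain ⟨z, hz, hzmin⟩ := (isCompact_closedBall x K).exists_isMinOn ⟨_, hmem 0⟩
    hF.continuous.continuousOn
  have hzFs : F z ≤ Fstar :=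
    ge_of_tendsto' (tendsto_apply_iterate_gradientStep hF hL hlip hFs (by linarith) hdom x)
      fun n ↦ hzmin (hmem n)
  refine ⟨z, fun y ↦ hzFs.trans (hFs y), ?_⟩
  rwa [Metric.mem_closedBall, dist_comm, dist_eq_norm] at hz

lemma exists_forall_sub_le {τ α Fstar : ℝ} (hF : Differentiable ℝ F) (hL : 0 < L)
    (hlip : ∀ x y, ‖gradient F x - gradient F y‖ ≤ L * ‖x - y‖) (hFs : ∀ y, Fstar ≤ F y)
    (hτ : 0 ≤ τ) (hα₀ : 0 ≤ α) (hα₂ : α < 2)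
    (hdom : ∀ x, F x - Fstar ≤ τ * ‖gradient F x‖ ^ α) :
    ∃ B, ∀ x, F x - Fstar ≤ B := by
  set C := max 1 ((4 * L * τ) ^ (2 - α)⁻¹)
  refine ⟨τ * C ^ α, fun x ↦ (hdom x).trans ?_⟩
  have hgrad : ‖gradient F x‖ ≤ C := by
    refine le_max_one_rpow_of_sq_le_mul_rpow hα₂ (norm_nonneg _) ?_
    calc ‖gradient F x‖ ^ 2 ≤ 4 * L * (F x - Fstar) := sq_norm_gradient_le hF hL hlip hFs x
    _ ≤ 4 * L * (τ * ‖gradient F x‖ ^ α) := by gcongr; exact hdom x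
    _ = 4 * L * τ * ‖gradient F x‖ ^ α := by ring
  gcongr

end GradientDescent

theorem stmt_4_general {d : ℕ} (hd : 0 < d) (F : EuclideanSpace ℝ (Fin d) → ℝ)
    (L τ α Fstar : ℝ)
    (hL : 0 < L) (hτ : 0 < τ) (hα1 : 1 < α) (hα2 : α < 2)
    (hF : Differentiable ℝ F) (hlb : IsGLB (Set.range F) Fstar)
    (M : Set (EuclideanSpace ℝ (Fin d)))
    (hM : M = {v | ∀ y, F v ≤ F y})
    (hMbd : Bornology.IsBounded M)
    (hlip : ∀ x y, ‖gradient F x - gradient F y‖ ≤ L * ‖x - y‖)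
    (hdom : ∀ x, F x - Fstar ≤ τ * ‖gradient F x‖ ^ α) :
    False := by
  have hFs (y : EuclideanSpace ℝ (Fin d)) : Fstar ≤ F y := hlb.1 (Set.mem_range_self y)
  obtain ⟨B, hB⟩ := exists_forall_sub_le hF hL hlip hFs hτ.le (by linarith) hα2 hdom
  have : Nonempty (Fin d) := ⟨⟨0, hd⟩⟩
  refine NormedSpace.unbounded_univ ℝ (EuclideanSpace ℝ (Fin d)) <|
    (hMbd.cthickening (δ := 2 * τ ^ α⁻¹ / (1 - α⁻¹) * B ^ (1 - α⁻¹))).subset fun x _ ↦ ?_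
  obtain ⟨z, hz, hxz⟩ := exists_forall_le_and_norm_sub_le hF hL hlip hFs hτ.le hα1 hdom x
  refine Metric.mem_cthickening_of_dist_le x z _ M (hM ▸ hz) ?_
  have hp : 0 < 1 - α⁻¹ := sub_pos.2 (inv_lt_one_of_one_lt₀ hα1)
  rw [dist_eq_norm]
  exact hxz.trans (by gcongr; exacts [sub_nonneg.2 (hFs x), hB x])

theorem stmt_4 {d : ℕ} (hd : 0 < d) (F : EuclideanSpace ℝ (Fin d) → ℝ)
    (L τ α Fstar : ℝ)
    (hL : 0 < L) (hτ : 0 < τ) (hα1 : 1 < α) (hα2 : α < 2)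
    (hF : Differentiable ℝ F) (hlb : IsGLB (Set.range F) Fstar)
    (M : Set (EuclideanSpace ℝ (Fin d)))
    (hM : M = {v | ∀ y, F v ≤ F y}) (hMne : M.Nonempty)
    (hMbd : Bornology.IsBounded M)
    (hlip : ∀ x y, ‖gradient F x - gradient F y‖ ≤ L * ‖x - y‖)
    (hdom : ∀ x, F x - Fstar ≤ τ * ‖gradient F x‖ ^ α) :
    False :=
  stmt_4_general hd F L τ α Fstar hL hτ hα1 hα2 hF hlb M hM hMbd hlip hdom
end

section
/- Let {δₜ}ₜ≥0 be a nonnegative sequence satisfying δ_{t+1} ≤ δₜ + (ηₜσ²)/(2bₜ) - (ηₜ/(2τ^{2/α})) δₜ^{2/α}, with ηₜ = η₀(t+1)^{-γ}, bₜ = b₀(t+1)^b, γ ∈ [0,1), and b = 2(1-γ)/(2-α) with 1 ≤ α < 2. Then δ_T = O(T^{-β}) with β = α(1-γ)/(2-α); i.e., there is a constant C (depending on the parameters and δ₀) such that δ_T ≤ C · T^{-β} for all T ≥ 1. -/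
/-!
With `β = α(1-γ)/(2-α)` and `e = 2/α > 1` the recursion takes the form
`δ (t+1) ≤ δ t + a (t+1)^(-(β+1)) - c (t+1)^(βe-(β+1)) (δ t)^e`, and the bound
`δ t ≤ C t^(-β)` propagates by induction once `C` is large. If `δ t ≤ (C/2)(t+1)^(-β)`, the
noise term adds at most another `(C/2)(t+1)^(-β)`. Otherwise the dissipation term is at least
`c (C/2)^e (t+1)^(-(β+1))`, which, since `e > 1`, dominates for large `C` both the noise and the
gap `C (t^(-β) - (t+1)^(-β)) ≤ C β 2^(β+1) (t+1)^(-(β+1))` between consecutive targets.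
-/

open Real Filter

lemma one_sub_mul_le_one_add_rpow_neg {h p : ℝ} (hh : -1 < h) (hp : 0 ≤ p) :
    1 - p * h ≤ (1 + h) ^ (-p) :=
  calc 1 - p * h ≤ exp (h * -p) := by linarith [add_one_le_exp (h * -p)]
    _ = exp h ^ (-p) := exp_mul h (-p)
    _ ≤ (1 + h) ^ (-p) :=
      rpow_le_rpow_of_nonpos (by linarith) (by linarith [add_one_le_exp h]) (by linarith)

lemma rpow_neg_le_rpow_neg_add_one_add {x p : ℝ} (hx : 0 < x) (hp : 0 ≤ p) :
    x ^ (-p) ≤ (x + 1) ^ (-p) + p * x ^ (-(p + 1)) := by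
  have hsplit : (x + 1) ^ (-p) = x ^ (-p) * (1 + x⁻¹) ^ (-p) := by
    rw [← mul_rpow hx.le (by positivity)]
    congr 1
    field_simp
  have hpow : x ^ (-(p + 1)) = x ^ (-p) * x⁻¹ := by
    rw [neg_add, rpow_add hx, rpow_neg_one]
  have hbern := one_sub_mul_le_one_add_rpow_neg (h := x⁻¹) (by linarith [inv_pos.2 hx]) hp
  rw [hsplit, hpow]
  nlinarith [rpow_pos_of_pos hx (-p)]

lemma rpow_neg_le_two_rpow_mul_rpow_neg_add_one {x q : ℝ} (hx : 1 ≤ x) (hq : 0 ≤ q) :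
    x ^ (-q) ≤ 2 ^ q * (x + 1) ^ (-q) := by
  have hhalf : 2 ^ q * (x + 1) ^ (-q) = ((x + 1) / 2) ^ (-q) := by
    rw [div_rpow (by linarith) zero_le_two, rpow_neg zero_le_two, div_inv_eq_mul, mul_comm]
  rw [hhalf]
  exact rpow_le_rpow_of_nonpos (by linarith) (by linarith) (by linarith)

lemma eventually_mul_add_le_mul_rpow {K a c e : ℝ} (ha : 0 ≤ a) (hc : 0 < c) (he : 1 < e) :
    ∀ᶠ x in atTop, K * x + a ≤ c * x ^ e := by
  filter_upwards [eventually_ge_atTop 1,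
    (tendsto_rpow_atTop (sub_pos.2 he)).eventually_ge_atTop ((K + a) / c)] with x hx hxe
  have hsplit : x ^ e = x * x ^ (e - 1) := by
    rw [← rpow_one_add' (by linarith) (by linarith), add_sub_cancel]
  rw [div_le_iff₀ hc] at hxe
  rw [hsplit]
  nlinarith

section Recursion

variable {β a c e : ℝ}

lemma le_mul_rpow_neg_add_one_of_recursion {C x u v : ℝ} (hβ : 0 ≤ β) (ha : 0 ≤ a)
    (hc : 0 ≤ c) (he : 0 ≤ e) (haC : 2 * a ≤ C)
    (hC : C * β * 2 ^ (β + 1) + a ≤ c * (C / 2) ^ e)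
    (hx : 1 ≤ x) (hu : 0 ≤ u) (huC : u ≤ C * x ^ (-β))
    (hv : v ≤ u + a * (x + 1) ^ (-(β + 1)) - c * (x + 1) ^ (β * e - (β + 1)) * u ^ e) :
    v ≤ C * (x + 1) ^ (-β) := by
  have hy : 0 < x + 1 := by linarith
  have hC0 : 0 ≤ C := by linarith
  by_cases hsmall : u ≤ C / 2 * (x + 1) ^ (-β)
  · have hnoise : a * (x + 1) ^ (-(β + 1)) ≤ C / 2 * (x + 1) ^ (-β) :=
      mul_le_mul (by linarith) (rpow_le_rpow_of_exponent_le (by linarith) (by linarith))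
        (by positivity) (by linarith)
    have hdiss : 0 ≤ c * (x + 1) ^ (β * e - (β + 1)) * u ^ e := by positivity
    linarith
  · rw [not_le] at hsmall
    have hdiss : c * (C / 2) ^ e * (x + 1) ^ (-(β + 1))
        ≤ c * (x + 1) ^ (β * e - (β + 1)) * u ^ e :=
      calc c * (C / 2) ^ e * (x + 1) ^ (-(β + 1))
          = c * (x + 1) ^ (β * e - (β + 1)) * (C / 2 * (x + 1) ^ (-β)) ^ e := by
            have hexp :
                (x + 1) ^ (-(β + 1)) = (x + 1) ^ (β * e - (β + 1)) * (x + 1) ^ (-β * e) := by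
              rw [← rpow_add hy]
              ring_nf
            rw [mul_rpow (by positivity) (by positivity), ← rpow_mul hy.le, hexp]
            ring
        _ ≤ c * (x + 1) ^ (β * e - (β + 1)) * u ^ e := by gcongr
    have hdrift :
        C * x ^ (-β) ≤ C * (x + 1) ^ (-β) + C * β * 2 ^ (β + 1) * (x + 1) ^ (-(β + 1)) := by
      have h1 := rpow_neg_le_rpow_neg_add_one_add (by linarith : 0 < x) hβ
      have h2 := rpow_neg_le_two_rpow_mul_rpow_neg_add_one hx (by linarith : 0 ≤ β + 1)
      calc C * x ^ (-β) ≤ C * ((x + 1) ^ (-β) + β * x ^ (-(β + 1))) := by gcongr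
        _ ≤ C * ((x + 1) ^ (-β) + β * (2 ^ (β + 1) * (x + 1) ^ (-(β + 1)))) := by gcongr
        _ = _ := by ring
    have hdominate := mul_le_mul_of_nonneg_right hC (rpow_nonneg hy.le (-(β + 1)))
    linarith

theorem exists_le_mul_rpow_neg_of_recursion (δ : ℕ → ℝ) (hβ : 0 ≤ β) (ha : 0 ≤ a)
    (hc : 0 < c) (he : 1 < e) (hδ : ∀ t, 0 ≤ δ t)
    (hrec : ∀ t : ℕ, δ (t + 1) ≤ δ t + a * ((t : ℝ) + 1) ^ (-(β + 1))
      - c * ((t : ℝ) + 1) ^ (β * e - (β + 1)) * δ t ^ e) :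
    ∃ C : ℝ, ∀ T : ℕ, 1 ≤ T → δ T ≤ C * (T : ℝ) ^ (-β) := by
  obtain ⟨C, ⟨haC, hδC⟩, hC⟩ :=
    (((eventually_ge_atTop (2 * a)).and (eventually_ge_atTop (δ 1))).and
      (eventually_mul_add_le_mul_rpow (K := β * 2 ^ (β + 1)) ha
        (div_pos hc (rpow_pos_of_pos two_pos e)) he)).exists
  have hC' : C * β * 2 ^ (β + 1) + a ≤ c * (C / 2) ^ e := by
    rw [div_rpow (by linarith) zero_le_two, mul_div_left_comm, mul_comm]
    linarith
  refine ⟨C, fun T hT => ?_⟩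
  induction T, hT using Nat.le_induction with
  | base => simpa using hδC
  | succ t ht ih =>
    push_cast
    exact le_mul_rpow_neg_add_one_of_recursion hβ ha hc.le (by linarith) haC hC'
      (by exact_mod_cast ht) (hδ t) ih (hrec t)

end Recursion

theorem stmt_8_general (δ : ℕ → ℝ) (σ τ η₀ b₀ α γ : ℝ)
    (hτ : 0 < τ) (hη : 0 < η₀) (hb : 0 < b₀)
    (hα1 : 1 ≤ α) (hα2 : α < 2) (hγ2 : γ < 1)
    (hδ : ∀ t, 0 ≤ δ t)
    (hrec : ∀ t : ℕ, δ (t+1) ≤ δ t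
        + (η₀*((t:ℝ)+1)^(-γ)) * σ^2 / (2*(b₀*((t:ℝ)+1)^(2*(1-γ)/(2-α))))
        - (η₀*((t:ℝ)+1)^(-γ)) / (2*τ^(2/α)) * (δ t)^(2/α)) :
    ∃ C : ℝ, ∀ T : ℕ, 1 ≤ T → δ T ≤ C * (T:ℝ) ^ (-(α*(1-γ)/(2-α))) := by
  have hα0 : 0 < α := by linarith
  have h2α : 0 < 2 - α := by linarith
  have hβ : 0 ≤ α * (1 - γ) / (2 - α) := div_nonneg (mul_nonneg hα0.le (by linarith)) h2α.le
  refine exists_le_mul_rpow_neg_of_recursion δ (a := η₀ * σ ^ 2 / (2 * b₀))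
    (c := η₀ / (2 * τ ^ (2 / α))) hβ (by positivity) (by positivity)
    ((one_lt_div hα0).2 hα2) hδ fun t => ?_
  have hy : 0 < (t : ℝ) + 1 := by positivity
  have hnoise : -γ - 2 * (1 - γ) / (2 - α) = -(α * (1 - γ) / (2 - α) + 1) := by
    field_simp
    ring
  have hdiss : α * (1 - γ) / (2 - α) * (2 / α) - (α * (1 - γ) / (2 - α) + 1) = -γ := by
    field_simp
    ring
  rw [hdiss, ← hnoise, rpow_sub hy]
  convert hrec t using 2 <;> field_simp

theorem stmt_8 (δ : ℕ → ℝ) (σ τ η₀ b₀ α γ : ℝ)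
    (hσ : 0 < σ) (hτ : 0 < τ) (hη : 0 < η₀) (hb : 0 < b₀)
    (hα1 : 1 ≤ α) (hα2 : α < 2) (hγ1 : 0 ≤ γ) (hγ2 : γ < 1)
    (hδ : ∀ t, 0 ≤ δ t)
    (hrec : ∀ t : ℕ, δ (t+1) ≤ δ t
        + (η₀*((t:ℝ)+1)^(-γ)) * σ^2 / (2*(b₀*((t:ℝ)+1)^(2*(1-γ)/(2-α))))
        - (η₀*((t:ℝ)+1)^(-γ)) / (2*τ^(2/α)) * (δ t)^(2/α)) :
    ∃ C : ℝ, ∀ T : ℕ, 1 ≤ T → δ T ≤ C * (T:ℝ) ^ (-(α*(1-γ)/(2-α))) :=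
  stmt_8_general δ σ τ η₀ b₀ α γ hτ hη hb hα1 hα2 hγ2 hδ hrec
end

section
/- Let F be the hard-instance convex function above on [a_{j*}, a_{j*+1}) with derivative F'(x) = pG · |x - R/(2N) - a_{j*}|^{1/(α-1)}·sgn(x - R/(2N) - a_{j*}) / (R/(2N))^{1/(α-1)}. Then F satisfies the local gradient-dominance inequality F(x) - min F ≤ τ |F'(x)|^α for all x ∈ [a_{j*}, a_{j*+1}) whenever τ ≥ ((α-1)/α)·(R/(2N))·(pG)^{1-α}. -/
/-! With `h = R/(2N)`, `P = pG`, `u = |x - h - a|` and `β = 1/(α-1)`, we have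
`|F'(x)| = P u^β / h^β`, and since `αβ = 1 + β` the gradient-dominance inequality reduces,
after cancelling `u^{αβ}/h^β`, to the assumed bound `(α-1)/α · h · P^{1-α} ≤ τ`. -/

lemma abs_sign_mul_abs_rpow (y : ℝ) {β : ℝ} (hβ : β ≠ 0) :
    |Real.sign y| * |y| ^ β = |y| ^ β := by
  rcases lt_trichotomy y 0 with hy | rfl | hy
  · simp [Real.sign_of_neg hy]
  · simp [Real.zero_rpow hβ]
  · simp [Real.sign_of_pos hy]

lemma abs_mul_abs_rpow_mul_sign_div {P h : ℝ} (y : ℝ) {β : ℝ} (hP : 0 ≤ P) (hh : 0 ≤ h)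
    (hβ : β ≠ 0) : |P * |y| ^ β * Real.sign y / h ^ β| = P * |y| ^ β / h ^ β := by
  rw [abs_div, abs_mul, abs_mul, abs_of_nonneg (by positivity : 0 ≤ |y| ^ β), mul_assoc,
    mul_comm (_ ^ _), abs_sign_mul_abs_rpow y hβ, abs_of_nonneg hP,
    abs_of_nonneg (by positivity : 0 ≤ h ^ β)]

section ConjugateExponent

variable {α : ℝ} (hα : 1 < α)
include hα

lemma rpow_div_sub_one_eq_mul {h : ℝ} (hh : 0 ≤ h) :
    h ^ (α / (α - 1)) = h * h ^ (1 / (α - 1)) := by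
  have hα' : α - 1 ≠ 0 := by linarith
  have hsum : α / (α - 1) = 1 + 1 / (α - 1) := by field_simp; ring
  rw [hsum, Real.rpow_add' hh (hsum ▸ div_ne_zero (by linarith) hα'), Real.rpow_one]

lemma rpow_one_div_sub_one_div_rpow {P u h : ℝ} (hP : 0 ≤ P) (hu : 0 ≤ u) (hh : 0 < h) :
    (P * u ^ (1 / (α - 1)) / h ^ (1 / (α - 1))) ^ α
      = P ^ α * u ^ (α / (α - 1)) / (h * h ^ (1 / (α - 1))) := by
  rw [← rpow_div_sub_one_eq_mul hα hh.le, Real.div_rpow (by positivity) (by positivity),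
    Real.mul_rpow hP (by positivity), ← Real.rpow_mul hu, ← Real.rpow_mul hh.le,
    one_div_mul_eq_div]

lemma mul_rpow_div_le_of_le {P h u τ : ℝ} (hP : 0 < P) (hh : 0 < h) (hu : 0 ≤ u)
    (hτ : (α - 1) / α * h * P ^ (1 - α) ≤ τ) :
    P * ((α - 1) / α) * u ^ (α / (α - 1)) / h ^ (1 / (α - 1))
      ≤ τ * (P * u ^ (1 / (α - 1)) / h ^ (1 / (α - 1))) ^ α := by
  have hPpow : P ^ (1 - α) * P ^ α = P := by
    rw [← Real.rpow_add hP, sub_add_cancel, Real.rpow_one]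
  have hlhs : P * ((α - 1) / α) * u ^ (α / (α - 1)) / h ^ (1 / (α - 1))
      = ((α - 1) / α * h * P ^ (1 - α))
          * (P ^ α * u ^ (α / (α - 1)) / (h * h ^ (1 / (α - 1)))) := by
    field_simp
    linear_combination (1 - α) * u ^ (α / (α - 1)) * hPpow
  rw [rpow_one_div_sub_one_div_rpow hα hP.le hu hh, hlhs]
  exact mul_le_mul_of_nonneg_right hτ (by positivity)

end ConjugateExponent

theorem stmt_17_general (p G α R τ : ℝ) (N : ℕ) (a : ℝ)
    (hp1 : 0 < p) (hG : 0 < G)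
    (hα1 : 1 < α) (hR : 0 < R) (hN : 0 < N)
    (hτ : ((α-1)/α) * (R/(2*N)) * (p*G) ^ (1-α) ≤ τ) :
    ∀ x ∈ Set.Ico a (a + R/N),
      p*G*((α-1)/α) * |x - R/(2*N) - a| ^ (α/(α-1)) / (R/(2*N)) ^ (1/(α-1)) ≤
        τ * |p*G * |x - R/(2*N) - a| ^ (1/(α-1)) * Real.sign (x - R/(2*N) - a)
              / (R/(2*N)) ^ (1/(α-1))| ^ α := by
  intro x _
  have hP : 0 < p * G := mul_pos hp1 hG
  have hh : 0 < R / (2 * N) := by positivity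
  rw [abs_mul_abs_rpow_mul_sign_div _ hP.le hh.le (one_div_ne_zero (by linarith))]
  exact mul_rpow_div_le_of_le hα1 hP hh (abs_nonneg _) hτ

theorem stmt_17 (p G α R τ : ℝ) (N : ℕ) (a : ℝ)
    (hp1 : 0 < p) (hp2 : p < 1/2) (hG : 0 < G)
    (hα1 : 1 < α) (hα2 : α ≤ 2) (hR : 0 < R) (hN : 0 < N) (hτ0 : 0 < τ)
    (hτ : ((α-1)/α) * (R/(2*N)) * (p*G) ^ (1-α) ≤ τ) :
    ∀ x ∈ Set.Ico a (a + R/N),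
      p*G*((α-1)/α) * |x - R/(2*N) - a| ^ (α/(α-1)) / (R/(2*N)) ^ (1/(α-1)) ≤
        τ * |p*G * |x - R/(2*N) - a| ^ (1/(α-1)) * Real.sign (x - R/(2*N) - a)
              / (R/(2*N)) ^ (1/(α-1))| ^ α :=
  stmt_17_general p G α R τ N a hp1 hG hα1 hR hN hτ
end
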